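/- The central binomial-trinomial coefficients T(n) = [X^n](1+X+X^2)^n satisfy the sandwich inequality: for every n ≥ 2 and every 0 ≤ k ≤ n-1, T(n-1)·1 < T(n) + 2·[X^{n-k}](1+X+X^2)^n ≤ 3·T(n), where T(m) here denotes [X^m](1+X+X^2)^m; equivalently 1 < |E(SSB(n,k))|/|E(Δ_{n-1})| ≤ 3. -/

import Mathlib

/-- Ewald set of SSB(n,k). -/
def ssbEwald (n k : ℕ) (h : 0 < n) : Set (Fin n → ℤ) :=
  {x | ((∀ i, -1 ≤ x i) ∧ x ⟨0, h⟩ ≤ 1 ∧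
          (k : ℤ) * x ⟨0, h⟩ + ∑ i ∈ Finset.univ.erase ⟨0, h⟩, x i ≤ 1) ∧
       ((∀ i, -1 ≤ -(x i)) ∧ -(x ⟨0, h⟩) ≤ 1 ∧
          (k : ℤ) * (-(x ⟨0, h⟩)) + ∑ i ∈ Finset.univ.erase ⟨0, h⟩, -(x i) ≤ 1)}

/-- Ewald set of the monotone simplex Δ_m. -/
def simplexEwald (m : ℕ) : Set (Fin m → ℤ) :=
  {x | ((∀ i, -1 ≤ x i) ∧ ∑ i, x i ≤ 1) ∧ ((∀ i, -1 ≤ -(x i)) ∧ ∑ i, -(x i) ≤ 1)}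

/-!
Write `t(m, s)` for the number of `y ∈ {-1, 0, 1}^m` with `∑ y = s`. Splitting by the sum, the
`y` with `|∑ y - a| ≤ 1` number `t(m, a - 1) + t(m, a) + t(m, a + 1) = t(m + 1, a)`. So
`|E(Δ_{n-1})| = t(n, 0)`, and splitting `E(SSB(n, k))` by its first coordinate `c ∈ {-1, 0, 1}`
gives `t(n, k) + t(n, 0) + t(n, -k) = t(n, 0) + 2 t(n, k)`. The sandwich then reduces to
`0 < t(n, k) ≤ t(n, 0)`: positivity for `k ≤ n`, and unimodality of `s ↦ t(n, s)`, which
propagates through the recursion `t(m + 1, s) = t(m, s + 1) + t(m, s) + t(m, s - 1)` because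
`t(m, ·)` is even.
-/

open Finset

noncomputable abbrev ternaryCube (m : ℕ) : Finset (Fin m → ℤ) :=
  Fintype.piFinset fun _ => Icc (-1) 1

/-- The trinomial coefficient `[X^(m + s)] (1 + X + X²)^m`, so that `T(n) = trinomial n 0`. -/
noncomputable def trinomial (m : ℕ) (s : ℤ) : ℕ := #{y ∈ ternaryCube m | ∑ i, y i = s}

lemma sum_Icc_neg_one_one {M : Type*} [AddCommMonoid M] (f : ℤ → M) :
    ∑ c ∈ Icc (-1 : ℤ) 1, f c = f (-1) + f 0 + f 1 := by
  rw [show Icc (-1 : ℤ) 1 = {-1, 0, 1} by decide, sum_insert (by decide), sum_pair (by decide),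
    add_assoc]

lemma card_filter_piFinset_const_succ {α : Type*} [DecidableEq α] (S : Finset α) {m : ℕ}
    (P : α → (Fin m → α) → Prop) [∀ c, DecidablePred (P c)] :
    #{x ∈ Fintype.piFinset (fun _ : Fin (m + 1) => S) | P (x 0) (Fin.tail x)} =
      ∑ c ∈ S, #{y ∈ Fintype.piFinset (fun _ : Fin m => S) | P c y} := by
  rw [card_eq_sum_card_fiberwise (f := fun x => x 0) (t := S)]
  · refine sum_congr rfl fun c hc => card_nbij' Fin.tail (fun y => Fin.cons c y) ?_ ?_ ?_ ?_
    · intro x hx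
      obtain ⟨hxP, rfl⟩ := mem_filter.1 hx
      obtain ⟨hx, hP⟩ := mem_filter.1 hxP
      exact mem_filter.2 ⟨(Fin.mem_piFinset_iff_zero_tail.1 hx).2, hP⟩
    · intro y hy
      simp_all [Fin.forall_fin_succ]
    · intro x hx
      obtain ⟨-, rfl⟩ := mem_filter.1 hx
      exact Fin.cons_self_tail x
    · intro y _
      exact Fin.tail_cons (α := fun _ => α) c y
  · intro x hx
    exact (Fin.mem_piFinset_iff_zero_tail.1 (mem_filter.1 hx).1).1

lemma trinomial_succ (m : ℕ) (s : ℤ) :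
    trinomial (m + 1) s = trinomial m (s + 1) + trinomial m s + trinomial m (s - 1) := by
  have h : trinomial (m + 1) s = #{x ∈ ternaryCube (m + 1) | ∑ i, Fin.tail x i = s - x 0} := by
    refine congrArg card (filter_congr fun x _ => ?_)
    rw [Fin.sum_univ_succ, eq_sub_iff_add_eq']
    rfl
  rw [h, card_filter_piFinset_const_succ _ (fun c y => ∑ i, y i = s - c), sum_Icc_neg_one_one]
  simp [trinomial]

lemma trinomial_zero (s : ℤ) : trinomial 0 s = if s = 0 then 1 else 0 := by
  split_ifs with h <;> simp [trinomial, ternaryCube, h, eq_comm]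

lemma trinomial_neg (m : ℕ) (s : ℤ) : trinomial m (-s) = trinomial m s := by
  induction m generalizing s with
  | zero => simp [trinomial_zero]
  | succ m ih =>
    rw [trinomial_succ, trinomial_succ, show -s + 1 = -(s - 1) by ring,
      show -s - 1 = -(s + 1) by ring, ih, ih, ih]
    ring

lemma trinomial_antitone (m : ℕ) : Antitone fun j : ℕ => trinomial m j := by
  induction m with
  | zero =>
    exact antitone_nat_of_succ_le fun j => by
      simp [trinomial_zero, show (j : ℤ) + 1 ≠ 0 by omega]
  | succ m ih =>
    refine antitone_nat_of_succ_le fun j => ?_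
    have h : trinomial m (j + 2) ≤ trinomial m (j - 1) := by
      cases j with
      | zero => simpa [← trinomial_neg m 1] using ih (by norm_num : 1 ≤ 2)
      | succ i => simpa [add_assoc] using ih (by omega : i ≤ i + 3)
    push_cast
    rw [trinomial_succ, trinomial_succ, add_assoc (j : ℤ) 1 1, add_sub_cancel_right]
    norm_num at h ⊢
    omega

lemma trinomial_pos {m j : ℕ} (hj : j ≤ m) : 0 < trinomial m j := by
  induction m generalizing j with
  | zero => simp [show j = 0 by omega, trinomial_zero]
  | succ m ih =>
    rw [trinomial_succ]
    cases j with
    | zero => have := ih (Nat.zero_le m); omega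
    | succ i =>
      have := ih (by omega : i ≤ m)
      push_cast
      rw [add_sub_cancel_right]
      omega

lemma card_filter_abs_sum_sub_le_one (m : ℕ) (a : ℤ) :
    #{y ∈ ternaryCube m | |∑ i, y i - a| ≤ 1} = trinomial (m + 1) a := by
  have fibre (c : ℤ) (hc : |c| ≤ 1) :
      #{y ∈ {y ∈ ternaryCube m | |∑ i, y i - a| ≤ 1} | ∑ i, y i - a = c} =
        trinomial m (a + c) := by
    rw [filter_filter, trinomial]
    refine congrArg card (filter_congr fun y _ => ?_)
    rw [sub_eq_iff_eq_add', and_iff_right_iff_imp]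
    intro h
    rwa [h, add_sub_cancel_left]
  rw [card_eq_sum_card_fiberwise (f := fun y => ∑ i, y i - a) (t := Icc (-1) 1)
    (fun y hy => by simpa [abs_le] using (mem_filter.1 hy).2), sum_Icc_neg_one_one,
    fibre _ (by norm_num), fibre _ (by norm_num), fibre _ (by norm_num), trinomial_succ]
  ring_nf

lemma sum_erase_zero_eq_sum_tail {M : Type*} [AddCancelCommMonoid M] {m : ℕ}
    (x : Fin (m + 1) → M) :
    ∑ i ∈ univ.erase 0, x i = ∑ i, Fin.tail x i := by
  rw [← add_right_inj (x 0), add_sum_erase _ _ (mem_univ 0), Fin.sum_univ_succ]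
  rfl

lemma ncard_simplexEwald (m : ℕ) : (simplexEwald m).ncard = trinomial (m + 1) 0 := by
  have h : simplexEwald m = ↑{y ∈ ternaryCube m | |∑ i, y i - 0| ≤ 1} := by
    ext y
    simp only [simplexEwald, ternaryCube, coe_filter, Fintype.mem_piFinset, mem_Icc,
      sum_neg_distrib, sub_zero, abs_le, Set.mem_ofPred_eq]
    grind
  rw [h, Set.ncard_coe_finset, card_filter_abs_sum_sub_le_one]

lemma ncard_ssbEwald (m k : ℕ) (h : 0 < m + 1) :
    (ssbEwald (m + 1) k h).ncard = trinomial (m + 1) 0 + 2 * trinomial (m + 1) k := by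
  have hset : ssbEwald (m + 1) k h =
      ↑{x ∈ ternaryCube (m + 1) | |∑ i, Fin.tail x i - -((k : ℤ) * x 0)| ≤ 1} := by
    ext x
    simp only [ssbEwald, Fin.zero_eta, sum_erase_zero_eq_sum_tail, sum_neg_distrib, coe_filter,
      ternaryCube, Fintype.mem_piFinset, mem_Icc, abs_le, Set.mem_ofPred_eq]
    grind
  rw [hset, Set.ncard_coe_finset,
    card_filter_piFinset_const_succ _ (fun c y => |∑ i, y i - -((k : ℤ) * c)| ≤ 1),
    sum_Icc_neg_one_one]
  simp only [card_filter_abs_sum_sub_le_one, mul_neg, mul_zero, mul_one, neg_neg, neg_zero,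
    trinomial_neg]
  ring

/-- Sandwich inequality: |E(Δ_{n-1})| < |E(SSB(n,k))| ≤ 3|E(Δ_{n-1})|,
i.e. the ratio lies in (1,3]. -/
theorem ewald_SSB_sandwich (n k : ℕ) (hn : 2 ≤ n) (hk : k ≤ n - 1) :
    (simplexEwald (n - 1)).ncard < (ssbEwald n k (by omega)).ncard ∧
      (ssbEwald n k (by omega)).ncard ≤ 3 * (simplexEwald (n - 1)).ncard := by
  obtain ⟨m, rfl⟩ : ∃ m, n = m + 1 := ⟨n - 1, by omega⟩
  rw [Nat.add_sub_cancel, ncard_simplexEwald, ncard_ssbEwald]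
  have hpos : 0 < trinomial (m + 1) k := trinomial_pos (by omega)
  have hle : trinomial (m + 1) k ≤ trinomial (m + 1) 0 := trinomial_antitone (m + 1) k.zero_le
  constructor <;> omega
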